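/- The type-A DAHA-superpolynomials colored by omega_2 become perfect squares at t = 1: in Z[q, a] one has (i) HDA32w2(q, 1, a) = (1 + q + a*q)^2; (ii) HDA52w2(q, 1, a) = (1 + q + a*q + q^2 + a*q^2)^2; (iii) HDA43w2(q, 1, a) = (1 + q + a*q + 2*q^2 + 2*a*q^2 + q^3 + 2*a*q^3 + a^2*q^3)^2. -/
import Mathlib


set_option maxHeartbeats 1000000

open LaurentPolynomial

/-- The type-A DAHA-superpolynomial of the (3,2) torus knot colored by ω₂;
`ti` stands for the inverse t⁻¹ of `t`. -/
def HDA32w2 {R : Type*} [CommRing R] (q t ti a : R) : R :=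
  1 + a^2*q^2*ti + q*t + q*t^2 + q^2*t^4 + a*(q + q*ti + q^2*t + q^2*t^2)

/-- The type-A DAHA-superpolynomial of the (5,2) torus knot colored by ω₂;
`ti` stands for the inverse t⁻¹ of `t`. -/
def HDA52w2 {R : Type*} [CommRing R] (q t ti a : R) : R :=
  1 + q*t + q*t^2 + q^2*t^2 + q^2*t^3 + q^2*t^4 + q^3*t^5 + q^3*t^6 + q^4*t^8
  + a^2*(q^3 + q^2*ti + q^3*t + q^4*t^3)
  + a*(q + q^2 + q*ti + 2*q^2*t + q^2*t^2 + q^3*t^2 + 2*q^3*t^3 + q^3*t^4 + q^4*t^5 + q^4*t^6)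

/-- The type-A DAHA-superpolynomial of the (4,3) torus knot colored by ω₂;
`ti` stands for the inverse t⁻¹ of `t`. -/
def HDA43w2 {R : Type*} [CommRing R] (q t ti a : R) : R :=
  1 + a^4*q^6*ti^2 + q*t + q^2*t + q*t^2 + 2*q^2*t^2 + q^2*t^3 + 2*q^3*t^3 + q^2*t^4
  + 2*q^3*t^4 + q^4*t^4 + q^3*t^5 + q^4*t^5 + q^3*t^6 + 2*q^4*t^6 + q^4*t^7 + q^5*t^7
  + q^4*t^8 + q^5*t^8 + q^5*t^9 + q^5*t^10 + q^6*t^12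
  + a^3*(q^5 + q^6 + q^4*ti^2 + q^5*ti^2 + q^4*ti + q^5*ti + q^5*t + q^6*t + q^6*t^2 + q^6*t^3)
  + a^2*(2*q^3 + 2*q^4 + q^5 + q^3*ti^2 + q^2*ti + 2*q^3*ti + q^4*ti + q^3*t + 4*q^4*t
      + 2*q^5*t + 2*q^4*t^2 + 3*q^5*t^2 + q^4*t^3 + 3*q^5*t^3 + q^6*t^3 + 2*q^5*t^4
      + q^6*t^4 + q^5*t^5 + 2*q^6*t^5 + q^6*t^6 + q^6*t^7)
  + a*(q + 2*q^2 + q^3 + q*ti + q^2*ti + 2*q^2*t + 4*q^3*t + q^4*t + q^2*t^2 + 4*q^3*t^2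
      + 2*q^4*t^2 + 2*q^3*t^3 + 4*q^4*t^3 + q^5*t^3 + q^3*t^4 + 4*q^4*t^4 + 2*q^5*t^4
      + 2*q^4*t^5 + 3*q^5*t^5 + q^4*t^6 + 3*q^5*t^6 + 2*q^5*t^7 + q^6*t^7 + q^5*t^8
      + q^6*t^8 + q^6*t^9 + q^6*t^10)

/-- The Laurent polynomial ring ℤ[q^{±1}, a^{±1}]: `q` is the inner variable, `a` the outer. -/
abbrev Rqa : Type := LaurentPolynomial (LaurentPolynomial ℤ)

/-- The variable q in ℤ[q^{±1}, a^{±1}]. -/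
noncomputable def qv : Rqa := C (T 1)
/-- The variable a in ℤ[q^{±1}, a^{±1}]. -/
noncomputable def av : Rqa := T 1

/-- The type-A DAHA-superpolynomials colored by ω₂ become perfect squares at t = 1,
in the Laurent polynomial ring ℤ[q^{±1}, a^{±1}] (note that t⁻¹ = 1 when t = 1). -/
theorem typeA_omega2_superpolynomials_squares_at_t_one :
    HDA32w2 qv 1 1 av = (1 + qv + av*qv)^2 ∧
    HDA52w2 qv 1 1 av = (1 + qv + av*qv + qv^2 + av*qv^2)^2 ∧
    HDA43w2 qv 1 1 av = (1 + qv + av*qv + 2*qv^2 + 2*av*qv^2 + qv^3 + 2*av*qv^3 + av^2*qv^3)^2 := by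
  refine ⟨?_, ?_, ?_⟩ <;> simp only [HDA32w2, HDA52w2, HDA43w2] <;> ring
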